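/- Let τ_K, τ_M > 1 with τ_K⁻¹ + τ_M⁻¹ < 1, λ± := (√(τ_M⁻¹(1−τ_K⁻¹)) ± √(τ_K⁻¹(1−τ_M⁻¹)))², ρ_c² := 1/√((τ_M−1)(τ_K−1)), and let 𝒢(z) := [τ_M⁻¹+τ_K⁻¹−z+√((z−λ₋)(z−λ₊))]/(2z(z−1)) + 1/(zτ_K) for z ∈ (λ₊, 1] (positive square root). Consider, for ρ² ∈ [0,1], the equation z·[1−2τ_K⁻¹−(1/z)(τ_M⁻¹−τ_K⁻¹)−(1−z)𝒢(z)]·[1−τ_K⁻¹−τ_M⁻¹−(1−z)𝒢(z)] / [1−τ_M⁻¹−zτ_K⁻¹−z(1−z)𝒢(z)]² = ρ². Then: (a) the left-hand side equals [z − τ_M⁻¹ − τ_K⁻¹ + 2τ_M⁻¹τ_K⁻¹ + √((z−λ₋)(z−λ₊))]/(2(1−τ_M⁻¹)(1−τ_K⁻¹)), which is strictly increasing on [λ₊,1] with value ρ_c² at z = λ₊ and value 1 at z = 1; (b) if 0 ≤ ρ² ≤ ρ_c² the equation has no solution z ∈ (λ₊, 1]; (c) if ρ_c² < ρ² ≤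 1 it has a unique solution z_ρ ∈ (λ₊, 1], given explicitly by z_ρ = ((τ_K−1)ρ² + 1)((τ_M−1)ρ² + 1)/(ρ²τ_Kτ_M), and equivalently ρ² = [z_ρ − τ_M⁻¹ − τ_K⁻¹ + 2τ_M⁻¹τ_K⁻¹ + √((z_ρ−λ₋)(z_ρ−λ₊))]/(2(1−τ_M⁻¹)(1−τ_K⁻¹)). -/

import Mathlib

open MeasureTheory ProbabilityTheory Filter Matrix

noncomputable section

/-- Euclidean dot product on `Fin n → ℝ`. -/
def dotR {n : ℕ} (a b : Fin n → ℝ) : ℝ := ∑ i, a i * b i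

/-- The (cross-)covariance matrix `E[X Yᵀ]` of two mean-zero random vectors. -/
def covMat {Ω : Type} [MeasurableSpace Ω] (μ : Measure Ω) {n m : ℕ}
    (X : Ω → Fin n → ℝ) (Y : Ω → Fin m → ℝ) : Matrix (Fin n) (Fin m) ℝ :=
  Matrix.of fun i j => ∫ ω, X ω i * Y ω j ∂μ

/-- A random vector is centered (jointly) Gaussian if every linear functional of it
is a centered one-dimensional Gaussian. -/
def IsCenteredGaussianVec {Ω : Type} [MeasurableSpace Ω] (μ : Measure Ω)
    {n : ℕ} (X : Ω → Fin n → ℝ) : Prop :=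
  ∀ l : Fin n → ℝ, ∃ v : NNReal,
    Measure.map (fun ω => dotR l (X ω)) μ = gaussianReal 0 v

/-- Fourth-moment Gaussian family of random variables: mean zero and the Wick rule
for all fourth joint moments. -/
def FourthMomentGaussian {Ω : Type} [MeasurableSpace Ω] (μ : Measure Ω)
    {ι : Type} (X : ι → Ω → ℝ) : Prop :=
  (∀ i, ∫ ω, X i ω ∂μ = 0) ∧
  ∀ i j k l, ∫ ω, X i ω * X j ω * X k ω * X l ω ∂μ =
    (∫ ω, X i ω * X j ω ∂μ) * (∫ ω, X k ω * X l ω ∂μ)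
    + (∫ ω, X i ω * X k ω ∂μ) * (∫ ω, X j ω * X l ω ∂μ)
    + (∫ ω, X i ω * X l ω ∂μ) * (∫ ω, X j ω * X k ω ∂μ)

/-- Convergence in probability to a constant, along a sequence of probability spaces. -/
def TendstoInProb {Ω : ℕ → Type} [∀ S, MeasurableSpace (Ω S)]
    (μ : ∀ S, Measure (Ω S)) (X : ∀ S, Ω S → ℝ) (c : ℝ) : Prop :=
  ∀ ε : ℝ, 0 < ε →
    Tendsto (fun S => μ S {ω | ε ≤ |X S ω - c|}) atTop (nhds 0)

/-- `lam` is an antitone enumeration (with multiplicity) of the eigenvalues of `T`. -/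
def EigenvaluesOf {n : ℕ} (T : Matrix (Fin n) (Fin n) ℝ) (lam : Fin n → ℝ) : Prop :=
  Antitone lam ∧ T.charpoly = ∏ i, (Polynomial.X - Polynomial.C (lam i))

/-- The `K × K` matrix whose eigenvalues are the squared sample canonical
correlations between the rows of `U` and of `V`. -/
def ccaMatrix {K M S : ℕ} (U : Matrix (Fin K) (Fin S) ℝ) (V : Matrix (Fin M) (Fin S) ℝ) :
    Matrix (Fin K) (Fin K) ℝ :=
  (U * Uᵀ)⁻¹ * (U * Vᵀ) * (V * Vᵀ)⁻¹ * (V * Uᵀ)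

/-- The companion `M × M` matrix. -/
def ccaMatrixV {K M S : ℕ} (U : Matrix (Fin K) (Fin S) ℝ) (V : Matrix (Fin M) (Fin S) ℝ) :
    Matrix (Fin M) (Fin M) ℝ :=
  (V * Vᵀ)⁻¹ * (V * Uᵀ) * (U * Uᵀ)⁻¹ * (U * Vᵀ)

/-- `λ₊` resp. `λ₋`. -/
def lambdaPlus (τK τM : ℝ) : ℝ :=
  (Real.sqrt (τM⁻¹ * (1 - τK⁻¹)) + Real.sqrt (τK⁻¹ * (1 - τM⁻¹)))^2

def lambdaMinus (τK τM : ℝ) : ℝ :=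
  (Real.sqrt (τM⁻¹ * (1 - τK⁻¹)) - Real.sqrt (τK⁻¹ * (1 - τM⁻¹)))^2

/-- the detection threshold `ρ_c²`. -/
def rhoc2 (τK τM : ℝ) : ℝ := 1 / Real.sqrt ((τM - 1) * (τK - 1))

/-- the outlier location `z_ρ` (as a function of `ρ²`). -/
def zrho (τK τM ρ2 : ℝ) : ℝ :=
  ((τK - 1) * ρ2 + 1) * ((τM - 1) * ρ2 + 1) / (ρ2 * τK * τM)

/-- limit of `sin² θ_x`. -/
def sinx2 (τK τM ρ2 : ℝ) : ℝ :=
  (1 - ρ2) * (τK - 1) / ((τM - 1) * (τK - 1) * ρ2 - 1) *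
    (((τM - 1) * ρ2 + 1) / ((τK - 1) * ρ2 + 1))

/-- limit of `sin² θ_y`. -/
def siny2 (τK τM ρ2 : ℝ) : ℝ :=
  (1 - ρ2) * (τM - 1) / ((τM - 1) * (τK - 1) * ρ2 - 1) *
    (((τK - 1) * ρ2 + 1) / ((τM - 1) * ρ2 + 1))

/-- The modified Stieltjes transform of the Wachter distribution (explicit formula,
positive branch of the square root). -/
def calG (τK τM z : ℝ) : ℝ :=
  (τM⁻¹ + τK⁻¹ - z +
      Real.sqrt ((z - lambdaMinus τK τM) * (z - lambdaPlus τK τM))) / (2 * z * (z - 1))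
    + 1 / (z * τK)

/-- The left-hand side of equation (B.15) of the paper, as a function of `z`. -/
def masterLimitFun (τK τM z : ℝ) : ℝ :=
  z * (1 - 2 * τK⁻¹ - (1 / z) * (τM⁻¹ - τK⁻¹) - (1 - z) * calG τK τM z)
    * (1 - τK⁻¹ - τM⁻¹ - (1 - z) * calG τK τM z)
    / (1 - τM⁻¹ - z * τK⁻¹ - z * (1 - z) * calG τK τM z)^2

/-- The simplified form (B.24) of `masterLimitFun`. -/
def simplerFun (τK τM z : ℝ) : ℝ :=
  (z - τM⁻¹ - τK⁻¹ + 2 * τM⁻¹ * τK⁻¹ +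
      Real.sqrt ((z - lambdaMinus τK τM) * (z - lambdaPlus τK τM))) /
    (2 * (1 - τM⁻¹) * (1 - τK⁻¹))

/-!
Write `a = τK⁻¹`, `b = τM⁻¹`, `p = √((1 - a)(1 - b))`, `q = √(ab)`. Then
`λ± = a + b - 2ab ± 2pq` and `ρ_c² = q / p`, and
`s = √((z - λ₋)(z - λ₊))` satisfies `s² = z² - 2(a + b - 2ab)z + (a - b)²`.
Each factor of the master equation is affine in `s` over `z`, so (a) is a polynomial identity
modulo this relation for `s`. The simplified form is strictly increasing because `s` is, which
gives (b) and the uniqueness in (c). Finally `z_ρ` solves the simplified form because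
`s(z_ρ) = (p²ρ² - q²) / ρ` is the nonnegative root when `ρ > q / p`, and it lies in `(λ₊, 1]`
since `z_ρ - λ₊ = (pρ - q)² / ρ` and `1 - z_ρ = (p²ρ - q²)(1 - ρ) / ρ`.
-/

lemma inv_mem_Ioo_of_one_lt {τ : ℝ} (h : 1 < τ) : τ⁻¹ ∈ Set.Ioo 0 1 :=
  ⟨inv_pos.mpr (by linarith), inv_lt_one_of_one_lt₀ h⟩

lemma master_ratio_identity {a b z s : ℝ} (hz : z ≠ 0) (hR : 2 - a - b - z + s ≠ 0)
    (ha : a ≠ 1) (hb : b ≠ 1)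
    (hs : s ^ 2 = z ^ 2 - 2 * (a + b - 2 * a * b) * z + (a - b) ^ 2) :
    z * (((1 - 2 * a) * z + a - b + s) / (2 * z)) * (((1 - 2 * b) * z + b - a + s) / (2 * z))
        / ((2 - a - b - z + s) / 2) ^ 2
      = (z - b - a + 2 * b * a + s) / (2 * (1 - b) * (1 - a)) := by
  have ha' : 1 - a ≠ 0 := sub_ne_zero.mpr (Ne.symm ha)
  have hb' : 1 - b ≠ 0 := sub_ne_zero.mpr (Ne.symm hb)
  field_simp
  linear_combination (2 - 2*b - 2*a + 2*a*b - 4*z + 3*b*z + 3*a*z - 2*a*b*z - z*s + z^2) * hs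

lemma one_sub_mul_calG {τK τM z : ℝ} (hz : z ≠ 0) (hz1 : z ≠ 1) :
    (1 - z) * calG τK τM z
      = ((1 - 2 * τK⁻¹) * z + τK⁻¹ - τM⁻¹
          - √((z - lambdaMinus τK τM) * (z - lambdaPlus τK τM))) / (2 * z) := by
  have : z - 1 ≠ 0 := sub_ne_zero.mpr hz1
  rw [calG]
  field_simp
  ring

lemma masterLimitFun_eq {τK τM z : ℝ} (hz : z ≠ 0) (hz1 : z ≠ 1) :
    masterLimitFun τK τM z =
      z * (((1 - 2 * τK⁻¹) * z + τK⁻¹ - τM⁻¹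
            + √((z - lambdaMinus τK τM) * (z - lambdaPlus τK τM))) / (2 * z))
        * (((1 - 2 * τM⁻¹) * z + τM⁻¹ - τK⁻¹
            + √((z - lambdaMinus τK τM) * (z - lambdaPlus τK τM))) / (2 * z))
        / ((2 - τK⁻¹ - τM⁻¹ - z
            + √((z - lambdaMinus τK τM) * (z - lambdaPlus τK τM))) / 2) ^ 2 := by
  rw [masterLimitFun, mul_assoc z (1 - z), one_sub_mul_calG hz hz1]
  congr 3 <;> field_simp <;> ring

-- At `z = 1` the factor `1 - z` annihilates `calG`, whose formula divides by `z - 1`.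
lemma masterLimitFun_one {τK τM : ℝ} (h : τK⁻¹ + τM⁻¹ ≠ 1) : masterLimitFun τK τM 1 = 1 := by
  have : (1 - τM⁻¹ - τK⁻¹) ^ 2 ≠ 0 := pow_ne_zero 2 fun h' => h (by linarith)
  rw [masterLimitFun, div_eq_one_iff_eq (by simpa using this)]
  ring

section SpectralEdges

variable {τK τM : ℝ} (hτK : 1 < τK) (hτM : 1 < τM)
include hτK hτM

lemma sqrt_mul_sqrt_edge :
    √(τM⁻¹ * (1 - τK⁻¹)) * √(τK⁻¹ * (1 - τM⁻¹))
      = √(τK⁻¹ * τM⁻¹) * √((1 - τK⁻¹) * (1 - τM⁻¹)) := by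
  obtain ⟨ha0, ha1⟩ := inv_mem_Ioo_of_one_lt hτK
  obtain ⟨hb0, -⟩ := inv_mem_Ioo_of_one_lt hτM
  rw [← Real.sqrt_mul (by nlinarith), ← Real.sqrt_mul (by positivity)]
  ring_nf

lemma lambdaPlus_eq : lambdaPlus τK τM = τK⁻¹ + τM⁻¹ - 2 * τK⁻¹ * τM⁻¹
    + 2 * (√(τK⁻¹ * τM⁻¹) * √((1 - τK⁻¹) * (1 - τM⁻¹))) := by
  obtain ⟨ha0, ha1⟩ := inv_mem_Ioo_of_one_lt hτK
  obtain ⟨hb0, hb1⟩ := inv_mem_Ioo_of_one_lt hτM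
  rw [lambdaPlus, add_sq, mul_assoc 2, sqrt_mul_sqrt_edge hτK hτM, Real.sq_sqrt (by nlinarith),
    Real.sq_sqrt (by nlinarith)]
  ring

lemma lambdaMinus_eq : lambdaMinus τK τM = τK⁻¹ + τM⁻¹ - 2 * τK⁻¹ * τM⁻¹
    - 2 * (√(τK⁻¹ * τM⁻¹) * √((1 - τK⁻¹) * (1 - τM⁻¹))) := by
  obtain ⟨ha0, ha1⟩ := inv_mem_Ioo_of_one_lt hτK
  obtain ⟨hb0, hb1⟩ := inv_mem_Ioo_of_one_lt hτM
  rw [lambdaMinus, sub_sq, mul_assoc 2, sqrt_mul_sqrt_edge hτK hτM, Real.sq_sqrt (by nlinarith),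
    Real.sq_sqrt (by nlinarith)]
  ring

lemma lambdaMinus_le_lambdaPlus : lambdaMinus τK τM ≤ lambdaPlus τK τM := by
  rw [lambdaPlus_eq hτK hτM, lambdaMinus_eq hτK hτM]
  have := mul_nonneg (Real.sqrt_nonneg (τK⁻¹ * τM⁻¹)) (Real.sqrt_nonneg ((1 - τK⁻¹) * (1 - τM⁻¹)))
  linarith

lemma sub_lambdaMinus_mul_sub_lambdaPlus (z : ℝ) :
    (z - lambdaMinus τK τM) * (z - lambdaPlus τK τM)
      = z ^ 2 - 2 * (τK⁻¹ + τM⁻¹ - 2 * τK⁻¹ * τM⁻¹) * z + (τK⁻¹ - τM⁻¹) ^ 2 := by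
  obtain ⟨ha0, ha1⟩ := inv_mem_Ioo_of_one_lt hτK
  obtain ⟨hb0, hb1⟩ := inv_mem_Ioo_of_one_lt hτM
  have hq := Real.sq_sqrt (mul_pos ha0 hb0).le
  have hp := Real.sq_sqrt (mul_pos (sub_pos.2 ha1) (sub_pos.2 hb1)).le
  rw [lambdaPlus_eq hτK hτM, lambdaMinus_eq hτK hτM]
  linear_combination (-4 * (1 - τK⁻¹) * (1 - τM⁻¹)) * hq - 4 * √(τK⁻¹ * τM⁻¹) ^ 2 * hp

lemma sqrt_inv_mul_lt_sqrt_one_sub_mul (hτ : τK⁻¹ + τM⁻¹ < 1) :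
    √(τK⁻¹ * τM⁻¹) < √((1 - τK⁻¹) * (1 - τM⁻¹)) := by
  obtain ⟨ha0, -⟩ := inv_mem_Ioo_of_one_lt hτK
  obtain ⟨hb0, -⟩ := inv_mem_Ioo_of_one_lt hτM
  exact Real.sqrt_lt_sqrt (by positivity) (by linarith)

lemma rhoc2_eq : rhoc2 τK τM = √(τK⁻¹ * τM⁻¹) / √((1 - τK⁻¹) * (1 - τM⁻¹)) := by
  obtain ⟨-, ha1⟩ := inv_mem_Ioo_of_one_lt hτK
  obtain ⟨-, hb1⟩ := inv_mem_Ioo_of_one_lt hτM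
  have hK1 : τK - 1 ≠ 0 := by linarith
  have hM1 : τM - 1 ≠ 0 := by linarith
  have : τK⁻¹ * τM⁻¹ / ((1 - τK⁻¹) * (1 - τM⁻¹)) = 1 / ((τM - 1) * (τK - 1)) := by
    field_simp
  rw [rhoc2, ← Real.sqrt_div' _ (by nlinarith), this, Real.sqrt_div' _ (by nlinarith),
    Real.sqrt_one]

lemma simplerFun_lambdaPlus : simplerFun τK τM (lambdaPlus τK τM) = rhoc2 τK τM := by
  obtain ⟨-, ha1⟩ := inv_mem_Ioo_of_one_lt hτK
  obtain ⟨-, hb1⟩ := inv_mem_Ioo_of_one_lt hτM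
  have hp := Real.sq_sqrt (mul_pos (sub_pos.2 ha1) (sub_pos.2 hb1)).le
  have hp0 : 0 < √((1 - τK⁻¹) * (1 - τM⁻¹)) := Real.sqrt_pos.2 (by nlinarith)
  rw [simplerFun, sub_self, mul_zero, Real.sqrt_zero, rhoc2_eq hτK hτM,
    div_eq_div_iff (by nlinarith) hp0.ne', lambdaPlus_eq hτK hτM]
  linear_combination 2 * √(τK⁻¹ * τM⁻¹) * hp

lemma simplerFun_one (hτ : τK⁻¹ + τM⁻¹ < 1) : simplerFun τK τM 1 = 1 := by
  obtain ⟨-, ha1⟩ := inv_mem_Ioo_of_one_lt hτK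
  obtain ⟨-, hb1⟩ := inv_mem_Ioo_of_one_lt hτM
  have hdisc : (1 - lambdaMinus τK τM) * (1 - lambdaPlus τK τM) = (1 - τK⁻¹ - τM⁻¹) ^ 2 := by
    rw [sub_lambdaMinus_mul_sub_lambdaPlus hτK hτM]; ring
  rw [simplerFun, hdisc, Real.sqrt_sq (by linarith), div_eq_one_iff_eq (by nlinarith)]
  ring

lemma simplerFun_strictMonoOn : StrictMonoOn (simplerFun τK τM) (Set.Ici (lambdaPlus τK τM)) := by
  obtain ⟨-, ha1⟩ := inv_mem_Ioo_of_one_lt hτK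
  obtain ⟨-, hb1⟩ := inv_mem_Ioo_of_one_lt hτM
  have hlam := lambdaMinus_le_lambdaPlus hτK hτM
  intro x (hx : _ ≤ x) y (hy : _ ≤ y) hxy
  have hsqrt : √((x - lambdaMinus τK τM) * (x - lambdaPlus τK τM))
      ≤ √((y - lambdaMinus τK τM) * (y - lambdaPlus τK τM)) :=
    Real.sqrt_le_sqrt (mul_le_mul (by linarith) (by linarith) (by linarith) (by linarith))
  exact div_lt_div_of_pos_right (by linarith) (by nlinarith)

lemma masterLimitFun_eq_simplerFun (hτ : τK⁻¹ + τM⁻¹ < 1) {z : ℝ}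
    (hz : z ∈ Set.Ioc (lambdaPlus τK τM) 1) : masterLimitFun τK τM z = simplerFun τK τM z := by
  obtain ⟨-, ha1⟩ := inv_mem_Ioo_of_one_lt hτK
  obtain ⟨-, hb1⟩ := inv_mem_Ioo_of_one_lt hτM
  rcases hz.2.eq_or_lt with rfl | hz1
  · rw [masterLimitFun_one hτ.ne, simplerFun_one hτK hτM hτ]
  have hz0 : 0 < z := lt_of_le_of_lt (sq_nonneg _) hz.1
  have hlam := lambdaMinus_le_lambdaPlus hτK hτM
  have hs0 := Real.sqrt_nonneg ((z - lambdaMinus τK τM) * (z - lambdaPlus τK τM))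
  rw [masterLimitFun_eq hz0.ne' hz1.ne, simplerFun]
  refine master_ratio_identity hz0.ne' (by linarith) ha1.ne hb1.ne ?_
  rw [Real.sq_sqrt (mul_nonneg (by linarith [hz.1]) (by linarith [hz.1])),
    sub_lambdaMinus_mul_sub_lambdaPlus hτK hτM]

end SpectralEdges

section Outlier

variable {τK τM ρ2 : ℝ} (hτK : 1 < τK) (hτM : 1 < τM)
include hτK hτM

lemma lt_mul_of_rhoc2_lt (h : rhoc2 τK τM < ρ2) :
    √(τK⁻¹ * τM⁻¹) < √((1 - τK⁻¹) * (1 - τM⁻¹)) * ρ2 := by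
  obtain ⟨-, ha1⟩ := inv_mem_Ioo_of_one_lt hτK
  obtain ⟨-, hb1⟩ := inv_mem_Ioo_of_one_lt hτM
  rwa [rhoc2_eq hτK hτM, div_lt_iff₀' (Real.sqrt_pos.2 (by nlinarith))] at h

lemma zrho_mul (hρ : ρ2 ≠ 0) :
    zrho τK τM ρ2 * ρ2 = (1 - τK⁻¹) * (1 - τM⁻¹) * ρ2 ^ 2
      + (τK⁻¹ + τM⁻¹ - 2 * τK⁻¹ * τM⁻¹) * ρ2 + τK⁻¹ * τM⁻¹ := by
  rw [zrho]
  field_simp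
  ring

lemma zrho_sub_lambdaPlus (hρ : ρ2 ≠ 0) :
    zrho τK τM ρ2 - lambdaPlus τK τM
      = (√((1 - τK⁻¹) * (1 - τM⁻¹)) * ρ2 - √(τK⁻¹ * τM⁻¹)) ^ 2 / ρ2 := by
  obtain ⟨ha0, ha1⟩ := inv_mem_Ioo_of_one_lt hτK
  obtain ⟨hb0, hb1⟩ := inv_mem_Ioo_of_one_lt hτM
  have hq := Real.sq_sqrt (mul_pos ha0 hb0).le
  have hp := Real.sq_sqrt (mul_pos (sub_pos.2 ha1) (sub_pos.2 hb1)).le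
  rw [eq_div_iff hρ, sub_mul, zrho_mul hτK hτM hρ, lambdaPlus_eq hτK hτM]
  linear_combination -ρ2 ^ 2 * hp - hq

lemma one_sub_zrho (hρ : ρ2 ≠ 0) :
    1 - zrho τK τM ρ2 = ((1 - τK⁻¹) * (1 - τM⁻¹) * ρ2 - τK⁻¹ * τM⁻¹) * (1 - ρ2) / ρ2 := by
  rw [zrho]
  field_simp
  ring

lemma sub_lambdaMinus_mul_sub_lambdaPlus_zrho (hρ : ρ2 ≠ 0) :
    (zrho τK τM ρ2 - lambdaMinus τK τM) * (zrho τK τM ρ2 - lambdaPlus τK τM)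
      = (((1 - τK⁻¹) * (1 - τM⁻¹) * ρ2 ^ 2 - τK⁻¹ * τM⁻¹) / ρ2) ^ 2 := by
  rw [sub_lambdaMinus_mul_sub_lambdaPlus hτK hτM, zrho]
  field_simp
  ring

lemma pos_of_rhoc2_lt (h : rhoc2 τK τM < ρ2) : 0 < ρ2 :=
  pos_of_mul_pos_right ((Real.sqrt_nonneg _).trans_lt (lt_mul_of_rhoc2_lt hτK hτM h))
    (Real.sqrt_nonneg _)

lemma simplerFun_zrho (h : rhoc2 τK τM < ρ2) : simplerFun τK τM (zrho τK τM ρ2) = ρ2 := by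
  obtain ⟨ha0, ha1⟩ := inv_mem_Ioo_of_one_lt hτK
  obtain ⟨hb0, hb1⟩ := inv_mem_Ioo_of_one_lt hτM
  have hq := Real.sq_sqrt (mul_pos ha0 hb0).le
  have hp := Real.sq_sqrt (mul_pos (sub_pos.2 ha1) (sub_pos.2 hb1)).le
  have hρ := pos_of_rhoc2_lt hτK hτM h
  have hqp := lt_mul_of_rhoc2_lt hτK hτM h
  have hroot : 0 ≤ ((1 - τK⁻¹) * (1 - τM⁻¹) * ρ2 ^ 2 - τK⁻¹ * τM⁻¹) / ρ2 := by
    rw [← hp, ← hq]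
    have := pow_lt_pow_left₀ hqp (Real.sqrt_nonneg _) two_ne_zero
    exact div_nonneg (by linarith) hρ.le
  rw [simplerFun, sub_lambdaMinus_mul_sub_lambdaPlus_zrho hτK hτM hρ.ne', Real.sqrt_sq hroot,
    div_eq_iff (by nlinarith)]
  apply mul_right_cancel₀ hρ.ne'
  linear_combination zrho_mul hτK hτM hρ.ne' + div_mul_cancel₀
    ((1 - τK⁻¹) * (1 - τM⁻¹) * ρ2 ^ 2 - τK⁻¹ * τM⁻¹) hρ.ne'

lemma zrho_mem_Ioc (hτ : τK⁻¹ + τM⁻¹ < 1) (h : rhoc2 τK τM < ρ2) (h1 : ρ2 ≤ 1) :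
    zrho τK τM ρ2 ∈ Set.Ioc (lambdaPlus τK τM) 1 := by
  obtain ⟨ha0, ha1⟩ := inv_mem_Ioo_of_one_lt hτK
  obtain ⟨hb0, hb1⟩ := inv_mem_Ioo_of_one_lt hτM
  have hq := Real.sq_sqrt (mul_pos ha0 hb0).le
  have hp := Real.sq_sqrt (mul_pos (sub_pos.2 ha1) (sub_pos.2 hb1)).le
  have hρ := pos_of_rhoc2_lt hτK hτM h
  have hqp := lt_mul_of_rhoc2_lt hτK hτM h
  have hq_lt_p := sqrt_inv_mul_lt_sqrt_one_sub_mul hτK hτM hτ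
  constructor
  · have hgap : 0 < zrho τK τM ρ2 - lambdaPlus τK τM := by
      rw [zrho_sub_lambdaPlus hτK hτM hρ.ne']
      exact div_pos (pow_pos (sub_pos.2 hqp) 2) hρ
    linarith
  · have hfac : 0 ≤ (1 - τK⁻¹) * (1 - τM⁻¹) * ρ2 - τK⁻¹ * τM⁻¹ := by
      rw [← hp, ← hq]
      nlinarith [Real.sqrt_nonneg (τK⁻¹ * τM⁻¹)]
    have : 0 ≤ 1 - zrho τK τM ρ2 := by
      rw [one_sub_zrho hτK hτM hρ.ne']
      exact div_nonneg (mul_nonneg hfac (by linarith)) hρ.le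
    linarith

end Outlier

/-- Lemma B.2 of the paper: solvability of the limiting master equation. -/
theorem limiting_master_equation_solutions
    (τK τM : ℝ) (hτK : 1 < τK) (hτM : 1 < τM) (hτ : τK⁻¹ + τM⁻¹ < 1) :
    -- (a)
    (∀ z ∈ Set.Ioc (lambdaPlus τK τM) 1, masterLimitFun τK τM z = simplerFun τK τM z) ∧
    StrictMonoOn (simplerFun τK τM) (Set.Icc (lambdaPlus τK τM) 1) ∧
    simplerFun τK τM (lambdaPlus τK τM) = rhoc2 τK τM ∧
    simplerFun τK τM 1 = 1 ∧
    -- (b)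
    (∀ ρ2 : ℝ, 0 ≤ ρ2 → ρ2 ≤ rhoc2 τK τM →
      ¬ ∃ z, z ∈ Set.Ioc (lambdaPlus τK τM) 1 ∧ masterLimitFun τK τM z = ρ2) ∧
    -- (c)
    (∀ ρ2 : ℝ, rhoc2 τK τM < ρ2 → ρ2 ≤ 1 →
      (∃! z, z ∈ Set.Ioc (lambdaPlus τK τM) 1 ∧ masterLimitFun τK τM z = ρ2) ∧
      zrho τK τM ρ2 ∈ Set.Ioc (lambdaPlus τK τM) 1 ∧
      masterLimitFun τK τM (zrho τK τM ρ2) = ρ2 ∧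
      ρ2 = simplerFun τK τM (zrho τK τM ρ2)) := by
  have hmaster (z) (hz) := masterLimitFun_eq_simplerFun hτK hτM hτ (z := z) hz
  have hmono := simplerFun_strictMonoOn hτK hτM
  have hzrho (ρ2) (hρ : rhoc2 τK τM < ρ2) := simplerFun_zrho hτK hτM hρ
  refine ⟨hmaster, hmono.mono Set.Icc_subset_Ici_self, simplerFun_lambdaPlus hτK hτM,
    simplerFun_one hτK hτM hτ, ?_, ?_⟩
  · rintro ρ2 - hρ ⟨z, hz, hzρ⟩
    have := hmono Set.self_mem_Ici hz.1.le hz.1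
    rw [simplerFun_lambdaPlus hτK hτM, ← hmaster z hz, hzρ] at this
    linarith
  · intro ρ2 hρ hρ1
    have hmem := zrho_mem_Ioc hτK hτM hτ hρ hρ1
    have hsolves : masterLimitFun τK τM (zrho τK τM ρ2) = ρ2 :=
      (hmaster _ hmem).trans (hzrho ρ2 hρ)
    refine ⟨⟨_, ⟨hmem, hsolves⟩, fun y ⟨hy, hyρ⟩ => hmono.injOn hy.1.le hmem.1.le ?_⟩,
      hmem, hsolves, (hzrho ρ2 hρ).symm⟩
    rw [← hmaster y hy, hyρ, hzrho ρ2 hρ]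

end
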